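/- Frobenius reciprocity holds automatically in the boolean setting: let A, B be boolean algebras, u : B → A a boolean algebra homomorphism, and e : A → B monotone with e ⊣ u (e a ≤ b ↔ a ≤ u b). Then for all a ∈ A, b ∈ B, e(u b ⊓ a) = b ⊓ e a. -/

import Mathlib

/-! The inequality `e (u b ⊓ a) ≤ b ⊓ e a` holds for any Galois connection. Conversely, by adjunction
`e a ≤ b ⇨ e (u b ⊓ a)` reduces to `a ≤ u (b ⇨ e (u b ⊓ a))`, which follows from the unit
`u b ⊓ a ≤ u (e (u b ⊓ a))` as soon as `u b ⇨ u x ≤ u (b ⇨ x)`; in boolean algebras `b ⇨ x = x ⊔ bᶜ`,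
so this holds for every monotone `u` commuting with complements. -/

theorem Monotone.himp_le_map_himp {α β : Type*} [BooleanAlgebra α] [BooleanAlgebra β]
    {f : α → β} (hf : Monotone f) (hf_compl : ∀ a, f aᶜ = (f a)ᶜ) (a b : α) :
    f a ⇨ f b ≤ f (a ⇨ b) := by
  rw [himp_eq, himp_eq, ← hf_compl]
  exact hf.le_map_sup b aᶜ

theorem GaloisConnection.l_u_inf_eq_inf_l {α β : Type*}
    [GeneralizedHeytingAlgebra α] [GeneralizedHeytingAlgebra β] {l : α → β} {u : β → α}
    (gc : GaloisConnection l u) (hu_himp : ∀ b x, u b ⇨ u x ≤ u (b ⇨ x)) (a : α) (b : β) :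
    l (u b ⊓ a) = b ⊓ l a := by
  refine le_antisymm (le_inf (gc.l_le inf_le_left) (gc.monotone_l inf_le_right)) ?_
  have h : l a ≤ b ⇨ l (u b ⊓ a) :=
    gc.l_le <| (le_himp_iff'.2 (gc.le_u_l _)).trans (hu_himp _ _)
  exact (inf_le_inf_left b h).trans inf_himp_le

theorem frobenius_reciprocity_general {A B : Type*} [BooleanAlgebra A] [BooleanAlgebra B]
    (u : B → A)
    (hu_compl : ∀ b : B, u bᶜ = (u b)ᶜ)
    (e : A → B)
    (hadj : ∀ (a : A) (b : B), e a ≤ b ↔ a ≤ u b) :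
    ∀ (a : A) (b : B), e (u b ⊓ a) = b ⊓ e a := by
  have gc : GaloisConnection e u := hadj
  exact gc.l_u_inf_eq_inf_l (gc.monotone_u.himp_le_map_himp hu_compl)

theorem frobenius_reciprocity {A B : Type*} [BooleanAlgebra A] [BooleanAlgebra B]
    (u : B → A)
    (hu_inf : ∀ b₁ b₂ : B, u (b₁ ⊓ b₂) = u b₁ ⊓ u b₂)
    (hu_sup : ∀ b₁ b₂ : B, u (b₁ ⊔ b₂) = u b₁ ⊔ u b₂)
    (hu_top : u ⊤ = ⊤) (hu_bot : u ⊥ = ⊥)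
    (hu_compl : ∀ b : B, u bᶜ = (u b)ᶜ)
    (e : A → B) (he : Monotone e)
    (hadj : ∀ (a : A) (b : B), e a ≤ b ↔ a ≤ u b) :
    ∀ (a : A) (b : B), e (u b ⊓ a) = b ⊓ e a :=
  frobenius_reciprocity_general u hu_compl e hadj
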